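/- arXiv:0803.0072 — 7 statements merged into one kernel-verified Lean document; each statement's English description precedes it below -/
import Mathlib

section
/- Let a parabola y = a x² (a > 0) be tangent to a circle at two points A and B (so A and B are symmetric about the y-axis). Then a point P lies on the parabola if and only if the distance from P to the line AB equals the length of the tangent segment from P to the circle (i.e., the square of the distance from P to the line AB equals the power of P with respect to the circle). -/
/-!
Tangency at `(±t, a t²)` puts the centre on the axis at height `1 / (2a)` above the chord `AB`,
and then `r² = t² + 1 / (4a²)`. With these values the power of `P = (x, y)` minus the squared
distance from `P` to `AB` is `(a x² - y) / a`, which vanishes exactly on the parabola.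
-/

lemma center_on_axis_of_symmetric_tangency {a t Ix Iy : ℝ}
    (hA : (-t - Ix) * 1 + (a * t ^ 2 - Iy) * (-(2 * a * t)) = 0)
    (hB : (t - Ix) * 1 + (a * t ^ 2 - Iy) * (2 * a * t) = 0) : Ix = 0 := by
  linarith

lemma two_mul_mul_chord_sub_center_eq_neg_one {a t Iy : ℝ} (ht : t ≠ 0)
    (hB : t * 1 + (a * t ^ 2 - Iy) * (2 * a * t) = 0) :
    2 * a * (a * t ^ 2 - Iy) = -1 := by
  have h : t * (2 * a * (a * t ^ 2 - Iy) + 1) = 0 := by linear_combination hB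
  linear_combination (mul_eq_zero.mp h).resolve_left ht

lemma mul_power_sub_sq_dist_chord {a t r Iy : ℝ} (hc : 2 * a * (a * t ^ 2 - Iy) = -1)
    (hr : t ^ 2 + (a * t ^ 2 - Iy) ^ 2 = r ^ 2) (x y : ℝ) :
    a * (x ^ 2 + (y - Iy) ^ 2 - r ^ 2 - (y - a * t ^ 2) ^ 2) = a * x ^ 2 - y := by
  linear_combination (y - a * t ^ 2) * hc + a * hr

theorem parabola_tangent_circle_tangent_length_general
    (a t r Ix Iy : ℝ) (ht : 0 < t)
    (hB_on : (t - Ix) ^ 2 + (a * t ^ 2 - Iy) ^ 2 = r ^ 2)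
    (hA_tangent : (-t - Ix) * 1 + (a * t ^ 2 - Iy) * (-(2 * a * t)) = 0)
    (hB_tangent : (t - Ix) * 1 + (a * t ^ 2 - Iy) * (2 * a * t) = 0) :
    ∀ x y : ℝ, y = a * x ^ 2 ↔
      (y - a * t ^ 2) ^ 2 = (x - Ix) ^ 2 + (y - Iy) ^ 2 - r ^ 2 := by
  obtain rfl : Ix = 0 := center_on_axis_of_symmetric_tangency hA_tangent hB_tangent
  simp only [sub_zero] at hB_on hB_tangent ⊢
  have hc := two_mul_mul_chord_sub_center_eq_neg_one ht.ne' hB_tangent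
  have ha : a ≠ 0 := by
    rintro rfl
    norm_num at hc
  intro x y
  rw [eq_comm, ← sub_eq_zero, ← mul_power_sub_sq_dist_chord hc hB_on x y, mul_eq_zero,
    or_iff_right ha, sub_eq_zero, eq_comm]

/-- A parabola `y = a x²` (`a > 0`) is tangent to a circle with center `I = (Ix, Iy)` and
radius `r` at the points `A = (-t, a t²)` and `B = (t, a t²)`: both points lie on the circle
and the radius at each point is perpendicular to the tangent line of the parabola there.
Then a point `P = (x, y)` lies on the parabola iff the square of the distance from `P` to the
line `AB` (which is the horizontal line `y = a t²`) equals the power of `P` with respect to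
the circle. -/
theorem parabola_tangent_circle_tangent_length
    (a t r Ix Iy : ℝ) (ha : 0 < a) (ht : 0 < t) (hr : 0 < r)
    (hA_on : (-t - Ix) ^ 2 + (a * t ^ 2 - Iy) ^ 2 = r ^ 2)
    (hB_on : (t - Ix) ^ 2 + (a * t ^ 2 - Iy) ^ 2 = r ^ 2)
    (hA_tangent : (-t - Ix) * 1 + (a * t ^ 2 - Iy) * (-(2 * a * t)) = 0)
    (hB_tangent : (t - Ix) * 1 + (a * t ^ 2 - Iy) * (2 * a * t) = 0) :
    ∀ x y : ℝ, y = a * x ^ 2 ↔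
      (y - a * t ^ 2) ^ 2 = (x - Ix) ^ 2 + (y - Iy) ^ 2 - r ^ 2 :=
  parabola_tangent_circle_tangent_length_general a t r Ix Iy ht hB_on hA_tangent hB_tangent
end

section
/- Let a parabola y = a x² intersect a circle in four distinct points A, B, C, D. Then the slopes of the line AB and the line CD are negatives of each other; equivalently x_A + x_B = −(x_C + x_D), where x_P denotes the abscissa of P. In particular, the bisector of the angle formed at the intersection of the diagonals of the inscribed quadrilateral is parallel to the axis of the parabola (the y-axis). -/
/-!
Substituting `y = a x²` into the circle equation gives the quartic
`a² x⁴ + (1 - 2aq) x² - 2p x + (p² + q² - r²) = 0`, whose four distinct roots are the abscissae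
of `A, B, C, D`. It has no cubic term, so by Vieta the roots sum to zero; this relation follows
from taking divided differences of the quartic through its roots three times in succession.
-/

section QuarticRoots

variable {K : Type*} [CommRing K] [IsDomain K] {f : K → K} {A B C D E : K}

theorem quartic_firstDivDiff_eq_zero
    (hf : ∀ x, f x = A * x ^ 4 + B * x ^ 3 + C * x ^ 2 + D * x + E)
    {u v : K} (huv : u ≠ v) (hu : f u = 0) (hv : f v = 0) :
    A * (u ^ 3 + u ^ 2 * v + u * v ^ 2 + v ^ 3) + B * (u ^ 2 + u * v + v ^ 2) + C * (u + v) + D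
      = 0 := by
  rw [hf] at hu hv
  have h : (u - v) * (A * (u ^ 3 + u ^ 2 * v + u * v ^ 2 + v ^ 3) + B * (u ^ 2 + u * v + v ^ 2)
      + C * (u + v) + D) = 0 := by
    linear_combination hu - hv
  exact (mul_eq_zero.mp h).resolve_left (sub_ne_zero.mpr huv)

theorem quartic_secondDivDiff_eq_zero
    (hf : ∀ x, f x = A * x ^ 4 + B * x ^ 3 + C * x ^ 2 + D * x + E)
    {u v w : K} (huv : u ≠ v) (huw : u ≠ w) (hvw : v ≠ w)
    (hu : f u = 0) (hv : f v = 0) (hw : f w = 0) :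
    A * (u ^ 2 + v ^ 2 + w ^ 2 + u * v + v * w + w * u) + B * (u + v + w) + C = 0 := by
  have huv' := quartic_firstDivDiff_eq_zero hf huv hu hv
  have huw' := quartic_firstDivDiff_eq_zero hf huw hu hw
  have h : (v - w) * (A * (u ^ 2 + v ^ 2 + w ^ 2 + u * v + v * w + w * u) + B * (u + v + w) + C)
      = 0 := by
    linear_combination huv' - huw'
  exact (mul_eq_zero.mp h).resolve_left (sub_ne_zero.mpr hvw)

theorem quartic_sum_roots_eq
    (hf : ∀ x, f x = A * x ^ 4 + B * x ^ 3 + C * x ^ 2 + D * x + E)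
    {x₁ x₂ x₃ x₄ : K} (h12 : x₁ ≠ x₂) (h13 : x₁ ≠ x₃) (h14 : x₁ ≠ x₄)
    (h23 : x₂ ≠ x₃) (h24 : x₂ ≠ x₄) (h34 : x₃ ≠ x₄)
    (h₁ : f x₁ = 0) (h₂ : f x₂ = 0) (h₃ : f x₃ = 0) (h₄ : f x₄ = 0) :
    A * (x₁ + x₂ + x₃ + x₄) + B = 0 := by
  have h123 := quartic_secondDivDiff_eq_zero hf h12 h13 h23 h₁ h₂ h₃
  have h423 := quartic_secondDivDiff_eq_zero hf h24.symm h34.symm h23 h₄ h₂ h₃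
  have h : (x₁ - x₄) * (A * (x₁ + x₂ + x₃ + x₄) + B) = 0 := by
    linear_combination h123 - h423
  exact (mul_eq_zero.mp h).resolve_left (sub_ne_zero.mpr h14)

end QuarticRoots

/-- If the parabola `y = a x²` meets a circle in four distinct points
`A = (x₁, a x₁²)`, `B = (x₂, a x₂²)`, `C = (x₃, a x₃²)`, `D = (x₄, a x₄²)`,
then the slope of line `AB`, namely `a (x₁ + x₂)`, is the negative of the slope of
line `CD`, namely `a (x₃ + x₄)`; equivalently `x₁ + x₂ = -(x₃ + x₄)`.
Hence the bisector of the angle at the intersection of the diagonals of the inscribed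
quadrilateral is parallel to the axis of the parabola. -/
theorem parabola_circle_four_points_slopes
    (a p q r x₁ x₂ x₃ x₄ : ℝ) (ha : a ≠ 0)
    (h12 : x₁ ≠ x₂) (h13 : x₁ ≠ x₃) (h14 : x₁ ≠ x₄)
    (h23 : x₂ ≠ x₃) (h24 : x₂ ≠ x₄) (h34 : x₃ ≠ x₄)
    (hA : (x₁ - p) ^ 2 + (a * x₁ ^ 2 - q) ^ 2 = r ^ 2)
    (hB : (x₂ - p) ^ 2 + (a * x₂ ^ 2 - q) ^ 2 = r ^ 2)
    (hC : (x₃ - p) ^ 2 + (a * x₃ ^ 2 - q) ^ 2 = r ^ 2)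
    (hD : (x₄ - p) ^ 2 + (a * x₄ ^ 2 - q) ^ 2 = r ^ 2) :
    a * (x₁ + x₂) = -(a * (x₃ + x₄)) ∧ x₁ + x₂ = -(x₃ + x₄) := by
  set f : ℝ → ℝ := fun x ↦ (x - p) ^ 2 + (a * x ^ 2 - q) ^ 2 - r ^ 2
  have hf : ∀ x, f x = a ^ 2 * x ^ 4 + 0 * x ^ 3 + (1 - 2 * a * q) * x ^ 2 + (-2 * p) * x
      + (p ^ 2 + q ^ 2 - r ^ 2) := fun x ↦ by ring
  have hsum := quartic_sum_roots_eq hf h12 h13 h14 h23 h24 h34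
    (sub_eq_zero.mpr hA) (sub_eq_zero.mpr hB) (sub_eq_zero.mpr hC) (sub_eq_zero.mpr hD)
  have hsum' : x₁ + x₂ + x₃ + x₄ = 0 := by
    simpa [ha] using hsum
  exact ⟨by linear_combination a * hsum', by linear_combination hsum'⟩
end

section
/- Two parabolas with perpendicular axes intersect in four points lying on one circle, and the intersection point of the axes of the two parabolas is the barycenter (centroid) of the four intersection points. -/
/-! Multiplying `y - a x² - c = 0` by `b` and `x - b y² - d = 0` by `a` and adding gives
`a b (x² + y²) - a x - b y + (b c + a d) = 0`, a circle centred at `(1/(2b), 1/(2a))` through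
every common point. Substituting `y = a x² + c` into `x = b y² + d` gives a quartic in `x`
without cubic term; its four distinct roots are the abscissae of the four points, so by
Vieta they sum to zero. The same holds for the ordinates, with the roles of the parabolas
exchanged. -/

section Quartic

variable {R : Type*} [CommRing R] [NoZeroDivisors R]

theorem quartic_sum_roots_of_pairwise_ne {A E B C D x₁ x₂ x₃ x₄ : R}
    (h₁ : A * x₁ ^ 4 + E * x₁ ^ 3 + B * x₁ ^ 2 + C * x₁ + D = 0)
    (h₂ : A * x₂ ^ 4 + E * x₂ ^ 3 + B * x₂ ^ 2 + C * x₂ + D = 0)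
    (h₃ : A * x₃ ^ 4 + E * x₃ ^ 3 + B * x₃ ^ 2 + C * x₃ + D = 0)
    (h₄ : A * x₄ ^ 4 + E * x₄ ^ 3 + B * x₄ ^ 2 + C * x₄ + D = 0)
    (h₁₂ : x₁ ≠ x₂) (h₁₃ : x₁ ≠ x₃) (h₁₄ : x₁ ≠ x₄) (h₂₃ : x₂ ≠ x₃) (h₂₄ : x₂ ≠ x₄)
    (h₃₄ : x₃ ≠ x₄) :
    A * (x₁ + x₂ + x₃ + x₄) + E = 0 := by
  -- successive divided differences of the quartic, down to the third one
  have d₁₂ : A * (x₁ ^ 3 + x₁ ^ 2 * x₂ + x₁ * x₂ ^ 2 + x₂ ^ 3)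
      + E * (x₁ ^ 2 + x₁ * x₂ + x₂ ^ 2) + B * (x₁ + x₂) + C = 0 :=
    eq_zero_of_ne_zero_of_mul_left_eq_zero (sub_ne_zero.mpr h₁₂) (by linear_combination h₁ - h₂)
  have d₁₃ : A * (x₁ ^ 3 + x₁ ^ 2 * x₃ + x₁ * x₃ ^ 2 + x₃ ^ 3)
      + E * (x₁ ^ 2 + x₁ * x₃ + x₃ ^ 2) + B * (x₁ + x₃) + C = 0 :=
    eq_zero_of_ne_zero_of_mul_left_eq_zero (sub_ne_zero.mpr h₁₃) (by linear_combination h₁ - h₃)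
  have d₁₄ : A * (x₁ ^ 3 + x₁ ^ 2 * x₄ + x₁ * x₄ ^ 2 + x₄ ^ 3)
      + E * (x₁ ^ 2 + x₁ * x₄ + x₄ ^ 2) + B * (x₁ + x₄) + C = 0 :=
    eq_zero_of_ne_zero_of_mul_left_eq_zero (sub_ne_zero.mpr h₁₄) (by linear_combination h₁ - h₄)
  have d₁₂₃ : A * (x₁ ^ 2 + x₂ ^ 2 + x₃ ^ 2 + x₁ * x₂ + x₁ * x₃ + x₂ * x₃)
      + E * (x₁ + x₂ + x₃) + B = 0 :=
    eq_zero_of_ne_zero_of_mul_left_eq_zero (sub_ne_zero.mpr h₂₃) (by linear_combination d₁₂ - d₁₃)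
  have d₁₂₄ : A * (x₁ ^ 2 + x₂ ^ 2 + x₄ ^ 2 + x₁ * x₂ + x₁ * x₄ + x₂ * x₄)
      + E * (x₁ + x₂ + x₄) + B = 0 :=
    eq_zero_of_ne_zero_of_mul_left_eq_zero (sub_ne_zero.mpr h₂₄) (by linear_combination d₁₂ - d₁₄)
  exact eq_zero_of_ne_zero_of_mul_left_eq_zero (sub_ne_zero.mpr h₃₄)
    (by linear_combination d₁₂₃ - d₁₂₄)

end Quartic

theorem fst_ne_of_ne_of_eq_apply {α β : Type*} {f : α → β} {x x' : α} {y y' : β}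
    (hy : y = f x) (hy' : y' = f x') (h : (x, y) ≠ (x', y')) : x ≠ x' := by
  rintro rfl
  exact h (by rw [hy, hy'])

section Parabolas

variable {K : Type*} [Field K] {a b c d x y : K}

theorem quartic_of_mem_parabola_inter (hy : y = a * x ^ 2 + c) (hx : x = b * y ^ 2 + d) :
    a ^ 2 * b * x ^ 4 + 0 * x ^ 3 + 2 * a * b * c * x ^ 2 + (-1) * x + (b * c ^ 2 + d) = 0 := by
  subst hy
  linear_combination -hx

theorem sq_dist_eq_of_mem_parabola_inter [NeZero (2 : K)] (ha : a ≠ 0) (hb : b ≠ 0)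
    (hy : y = a * x ^ 2 + c) (hx : x = b * y ^ 2 + d) :
    (x - (2 * b)⁻¹) ^ 2 + (y - (2 * a)⁻¹) ^ 2 = (2 * b)⁻¹ ^ 2 + (2 * a)⁻¹ ^ 2 - c / a - d / b := by
  field_simp
  linear_combination (-4 * a * b ^ 2) * hy + (-4 * a ^ 2 * b) * hx

theorem sum_fst_eq_zero_of_mem_parabola_inter (ha : a ≠ 0) (hb : b ≠ 0)
    {x₁ y₁ x₂ y₂ x₃ y₃ x₄ y₄ : K}
    (h₁₂ : (x₁, y₁) ≠ (x₂, y₂)) (h₁₃ : (x₁, y₁) ≠ (x₃, y₃)) (h₁₄ : (x₁, y₁) ≠ (x₄, y₄))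
    (h₂₃ : (x₂, y₂) ≠ (x₃, y₃)) (h₂₄ : (x₂, y₂) ≠ (x₄, y₄)) (h₃₄ : (x₃, y₃) ≠ (x₄, y₄))
    (hP₁ : y₁ = a * x₁ ^ 2 + c ∧ x₁ = b * y₁ ^ 2 + d)
    (hP₂ : y₂ = a * x₂ ^ 2 + c ∧ x₂ = b * y₂ ^ 2 + d)
    (hP₃ : y₃ = a * x₃ ^ 2 + c ∧ x₃ = b * y₃ ^ 2 + d)
    (hP₄ : y₄ = a * x₄ ^ 2 + c ∧ x₄ = b * y₄ ^ 2 + d) :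
    x₁ + x₂ + x₃ + x₄ = 0 := by
  have hfst : ∀ {x y x' y' : K}, y = a * x ^ 2 + c → y' = a * x' ^ 2 + c →
      (x, y) ≠ (x', y') → x ≠ x' := fun hy hy' =>
      fst_ne_of_ne_of_eq_apply (f := fun x => a * x ^ 2 + c) hy hy'
  have hvieta := quartic_sum_roots_of_pairwise_ne
    (quartic_of_mem_parabola_inter hP₁.1 hP₁.2) (quartic_of_mem_parabola_inter hP₂.1 hP₂.2)
    (quartic_of_mem_parabola_inter hP₃.1 hP₃.2) (quartic_of_mem_parabola_inter hP₄.1 hP₄.2)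
    (hfst hP₁.1 hP₂.1 h₁₂) (hfst hP₁.1 hP₃.1 h₁₃)
    (hfst hP₁.1 hP₄.1 h₁₄) (hfst hP₂.1 hP₃.1 h₂₃)
    (hfst hP₂.1 hP₄.1 h₂₄) (hfst hP₃.1 hP₄.1 h₃₄)
  rw [add_zero] at hvieta
  exact eq_zero_of_ne_zero_of_mul_left_eq_zero (by positivity) hvieta

end Parabolas

/-- Two parabolas `y = a x² + c` (axis: the vertical line `x = 0`) and `x = b y² + d`
(axis: the horizontal line `y = 0`) meet in four distinct points `Pᵢ = (xᵢ, yᵢ)`.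
Then the four points lie on a common circle, and their barycenter is `(0, 0)`, the
intersection point of the two axes. -/
theorem parabolic_intersections_concyclic_and_centroid
    (a b c d : ℝ) (ha : a ≠ 0) (hb : b ≠ 0)
    (x₁ y₁ x₂ y₂ x₃ y₃ x₄ y₄ : ℝ)
    (hne12 : (x₁, y₁) ≠ (x₂, y₂)) (hne13 : (x₁, y₁) ≠ (x₃, y₃))
    (hne14 : (x₁, y₁) ≠ (x₄, y₄)) (hne23 : (x₂, y₂) ≠ (x₃, y₃))
    (hne24 : (x₂, y₂) ≠ (x₄, y₄)) (hne34 : (x₃, y₃) ≠ (x₄, y₄))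
    (hP1 : y₁ = a * x₁ ^ 2 + c ∧ x₁ = b * y₁ ^ 2 + d)
    (hP2 : y₂ = a * x₂ ^ 2 + c ∧ x₂ = b * y₂ ^ 2 + d)
    (hP3 : y₃ = a * x₃ ^ 2 + c ∧ x₃ = b * y₃ ^ 2 + d)
    (hP4 : y₄ = a * x₄ ^ 2 + c ∧ x₄ = b * y₄ ^ 2 + d) :
    (∃ p q r : ℝ,
      (x₁ - p) ^ 2 + (y₁ - q) ^ 2 = r ^ 2 ∧
      (x₂ - p) ^ 2 + (y₂ - q) ^ 2 = r ^ 2 ∧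
      (x₃ - p) ^ 2 + (y₃ - q) ^ 2 = r ^ 2 ∧
      (x₄ - p) ^ 2 + (y₄ - q) ^ 2 = r ^ 2) ∧
    (x₁ + x₂ + x₃ + x₄) / 4 = 0 ∧ (y₁ + y₂ + y₃ + y₄) / 4 = 0 := by
  have hcircle := fun {x y : ℝ} (hP : y = a * x ^ 2 + c ∧ x = b * y ^ 2 + d) =>
    sq_dist_eq_of_mem_parabola_inter ha hb hP.1 hP.2
  set R := (2 * b)⁻¹ ^ 2 + (2 * a)⁻¹ ^ 2 - c / a - d / b
  have hR : 0 ≤ R := hcircle hP1 ▸ by positivity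
  have hx := sum_fst_eq_zero_of_mem_parabola_inter ha hb hne12 hne13 hne14 hne23 hne24 hne34
    hP1 hP2 hP3 hP4
  have hy : y₁ + y₂ + y₃ + y₄ = 0 := sum_fst_eq_zero_of_mem_parabola_inter hb ha (Prod.swap_injective.ne hne12)
    (Prod.swap_injective.ne hne13) (Prod.swap_injective.ne hne14) (Prod.swap_injective.ne hne23)
    (Prod.swap_injective.ne hne24) (Prod.swap_injective.ne hne34)
    hP1.symm hP2.symm hP3.symm hP4.symm
  refine ⟨⟨(2 * b)⁻¹, (2 * a)⁻¹, √R, ?_⟩, by rw [hx, zero_div], by rw [hy, zero_div]⟩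
  rw [Real.sq_sqrt hR]
  exact ⟨hcircle hP1, hcircle hP2, hcircle hP3, hcircle hP4⟩
end

section
/- Let P = (x₀, a x₀²) be a point on the parabola y = a x², and let H = (x₀, a t²) be its projection onto the horizontal chord AB where A = (−t, a t²), B = (t, a t²), with |x₀| < t or |x₀| > t, x₀ ≠ ±t. Let K and L be the orthogonal projections of H onto lines AP and BP respectively. Then the four points A, B, K, L lie on one circle. -/
/-!
Expanding the circle equation along the line `AP`, the foot `K` of the perpendicular from `H`
lies on a circle through `A` with centre `c` exactly when `(A + H)/2 - c ⊥ P - A` (or `K = A`).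
For `c = (0, a t² + 1/(2a))` this holds for every `P` on the parabola: `(A + H)/2 - c` is
`((x₀ - t)/2, -1/(2a))` and `P - A` is proportional to `(1, a (x₀ - t))`. The same centre works
for `B`, by symmetry.
-/

theorem foot_mem_circle_of_midpoint_perp {c₁ c₂ r s : ℝ} {A P H K : ℝ × ℝ}
    (hA : (A.1 - c₁) ^ 2 + (A.2 - c₂) ^ 2 = r ^ 2)
    (hK : K = (A.1 + s * (P.1 - A.1), A.2 + s * (P.2 - A.2)))
    (hK_perp : (H.1 - K.1) * (P.1 - A.1) + (H.2 - K.2) * (P.2 - A.2) = 0)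
    (hc : (A.1 + H.1 - 2 * c₁) * (P.1 - A.1) + (A.2 + H.2 - 2 * c₂) * (P.2 - A.2) = 0) :
    (K.1 - c₁) ^ 2 + (K.2 - c₂) ^ 2 = r ^ 2 := by
  subst hK
  linear_combination hA + s * hc - s * hK_perp

theorem projections_concyclic_general
    (a t x₀ : ℝ) (ha : 0 < a)
    (A B P H K L : ℝ × ℝ)
    (hA : A = (-t, a * t ^ 2)) (hB : B = (t, a * t ^ 2))
    (hP : P = (x₀, a * x₀ ^ 2)) (hH : H = (x₀, a * t ^ 2))
    (hK_mem : ∃ s : ℝ, K = (A.1 + s * (P.1 - A.1), A.2 + s * (P.2 - A.2)))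
    (hK_perp : (H.1 - K.1) * (P.1 - A.1) + (H.2 - K.2) * (P.2 - A.2) = 0)
    (hL_mem : ∃ s : ℝ, L = (B.1 + s * (P.1 - B.1), B.2 + s * (P.2 - B.2)))
    (hL_perp : (H.1 - L.1) * (P.1 - B.1) + (H.2 - L.2) * (P.2 - B.2) = 0) :
    ∃ p q r : ℝ,
      (A.1 - p) ^ 2 + (A.2 - q) ^ 2 = r ^ 2 ∧
      (B.1 - p) ^ 2 + (B.2 - q) ^ 2 = r ^ 2 ∧
      (K.1 - p) ^ 2 + (K.2 - q) ^ 2 = r ^ 2 ∧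
      (L.1 - p) ^ 2 + (L.2 - q) ^ 2 = r ^ 2 := by
  obtain ⟨s, hK⟩ := hK_mem
  obtain ⟨u, hL⟩ := hL_mem
  have ha₀ : a ≠ 0 := ha.ne'
  set q := a * t ^ 2 + 1 / (2 * a)
  set r := √(t ^ 2 + (1 / (2 * a)) ^ 2)
  have hr : r ^ 2 = t ^ 2 + (1 / (2 * a)) ^ 2 := Real.sq_sqrt (by positivity)
  have hA_mem : (A.1 - 0) ^ 2 + (A.2 - q) ^ 2 = r ^ 2 := by
    rw [hr, hA]; ring
  have hB_mem : (B.1 - 0) ^ 2 + (B.2 - q) ^ 2 = r ^ 2 := by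
    rw [hr, hB]; ring
  refine ⟨0, q, r, hA_mem, hB_mem, foot_mem_circle_of_midpoint_perp hA_mem hK hK_perp ?_,
    foot_mem_circle_of_midpoint_perp hB_mem hL hL_perp ?_⟩
  all_goals
    subst hA hB hP hH q
    field_simp
    ring

/-- Let `P = (x₀, a x₀²)` be on the parabola `y = a x²` (`a > 0`, `t > 0`, `x₀ ≠ ±t`),
let `A = (-t, a t²)`, `B = (t, a t²)`, and let `H = (x₀, a t²)` be the foot of the
perpendicular from `P` to line `AB`. Let `K` and `L` be the orthogonal projections of `H`
onto lines `AP` and `BP` respectively. Then `A`, `B`, `K`, `L` lie on one circle. -/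
theorem projections_concyclic
    (a t x₀ : ℝ) (ha : 0 < a) (ht : 0 < t) (hx₁ : x₀ ≠ t) (hx₂ : x₀ ≠ -t)
    (A B P H K L : ℝ × ℝ)
    (hA : A = (-t, a * t ^ 2)) (hB : B = (t, a * t ^ 2))
    (hP : P = (x₀, a * x₀ ^ 2)) (hH : H = (x₀, a * t ^ 2))
    (hK_mem : ∃ s : ℝ, K = (A.1 + s * (P.1 - A.1), A.2 + s * (P.2 - A.2)))
    (hK_perp : (H.1 - K.1) * (P.1 - A.1) + (H.2 - K.2) * (P.2 - A.2) = 0)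
    (hL_mem : ∃ s : ℝ, L = (B.1 + s * (P.1 - B.1), B.2 + s * (P.2 - B.2)))
    (hL_perp : (H.1 - L.1) * (P.1 - B.1) + (H.2 - L.2) * (P.2 - B.2) = 0) :
    ∃ p q r : ℝ,
      (A.1 - p) ^ 2 + (A.2 - q) ^ 2 = r ^ 2 ∧
      (B.1 - p) ^ 2 + (B.2 - q) ^ 2 = r ^ 2 ∧
      (K.1 - p) ^ 2 + (K.2 - q) ^ 2 = r ^ 2 ∧
      (L.1 - p) ^ 2 + (L.2 - q) ^ 2 = r ^ 2 :=
  projections_concyclic_general a t x₀ ha A B P H K L hA hB hP hH hK_mem hK_perp hL_mem hL_perp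
end

section
/- Let ABCD be a quadrilateral inscribed in a circle whose diagonals AC and BD meet at L, and let the line through L bisect the angle ALD, meeting lines BC and AD at M and N. Then BM/MC = AN/ND. -/
/-!
Power of the point `L` gives `LA · LC = LB · LD`. Put `u = A - L`, `v = D - L`; then `C - L`
and `B - L` are negative multiples of `u` and `v`. By the angle bisector theorem the bisector
meets `AD` at `N = A + t (D - A)` with `(1 - t) ‖u‖ = t ‖v‖`. Writing `M = B + s (C - B)` and
expressing that `M - L` is parallel to `N - L` in the basis `u, v`, the power of the point turns
the parallelism condition into `s = t`: the bisector cuts `BC` and `AD` in the same ratio.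
-/

open EuclideanGeometry

open AffineMap Real

theorem lineMap_vsub_eq_smul_add_smul {k V P : Type*} [Ring k] [AddCommGroup V] [Module k V]
    [AddTorsor V P] (p₀ p₁ q : P) (c : k) :
    lineMap p₀ p₁ c -ᵥ q = (1 - c) • (p₀ -ᵥ q) + c • (p₁ -ᵥ q) := by
  rw [← lineMap_same_apply q c, lineMap_vsub_lineMap, lineMap_same_apply, lineMap_apply_module]

section Field

variable {k V P : Type*} [Field k] [AddCommGroup V] [Module k V]

theorem LinearIndependent.mul_eq_mul_of_smul_eq {u v w : V} (huv : LinearIndependent k ![u, v])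
    {a b c d r r' : k} (hx : r • w = a • u + b • v) (hy : r' • w = c • u + d • v) :
    a * d = b * c := by
  rw [LinearIndependent.pair_iff] at huv
  obtain ⟨hac, hbd⟩ := huv (r' * a - r * c) (r' * b - r * d) <| by
    calc _ = r' • (a • u + b • v) - r • (c • u + d • v) := by module
      _ = 0 := by rw [← hx, ← hy]; module
  by_cases hr : r = 0
  · obtain ⟨rfl, rfl⟩ := huv a b (by rw [← hx, hr, zero_smul])
    ring
  · refine mul_left_cancel₀ hr ?_
    linear_combination b * hac - a * hbd

variable [AddTorsor V P]

theorem linearIndependent_vsub_of_not_collinear {p₀ p₁ p₂ : P}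
    (h : ¬ Collinear k ({p₀, p₁, p₂} : Set P)) :
    LinearIndependent k ![p₁ -ᵥ p₀, p₂ -ᵥ p₀] := by
  rw [linearIndependent_fin2]
  refine ⟨fun h₂₀ => h ?_, fun a ha => h ?_⟩
  · simp [vsub_eq_zero_iff_eq.1 h₂₀, collinear_pair]
  · have hp₁ : p₁ ∈ line[k, p₀, p₂] := by
      rw [← vsub_vadd p₁ p₀, ← show a • (p₂ -ᵥ p₀) = p₁ -ᵥ p₀ from ha]
      exact smul_vsub_vadd_mem_affineSpan_pair a p₀ p₂
    simpa [Set.insert_comm] using collinear_insert_of_mem_affineSpan_pair hp₁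

theorem collinear_of_collinear_of_mem_affineSpan_pair {p₁ p₂ p₃ q : P}
    (hq : q ∈ line[k, p₂, p₃]) (hq₃ : q ≠ p₃) (h : Collinear k ({q, p₁, p₃} : Set P)) :
    Collinear k ({p₁, p₂, p₃} : Set P) := by
  have hp₁ : p₁ ∈ line[k, q, p₃] :=
    h.mem_affineSpan_of_mem_of_ne (by simp) (by simp) (by simp) hq₃
  exact collinear_insert_of_mem_affineSpan_pair
    (affineSpan_pair_le_of_mem_of_mem hq (right_mem_affineSpan_pair k p₂ p₃) hp₁)

end Field

namespace InnerProductGeometry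

variable {V : Type*} [NormedAddCommGroup V] [InnerProductSpace ℝ V]

/-- The angle bisector theorem, in vector form. -/
theorem mul_norm_eq_mul_norm_of_angle_eq {u v : V} (huv : LinearIndependent ℝ ![u, v]) {t : ℝ}
    (h : angle u ((1 - t) • u + t • v) = angle ((1 - t) • u + t • v) v) :
    (1 - t) * ‖u‖ = t * ‖v‖ := by
  set x := (1 - t) • u + t • v with hx
  have hu : u ≠ 0 := huv.ne_zero 0
  have hv : v ≠ 0 := huv.ne_zero 1
  rw [LinearIndependent.pair_iff] at huv
  have hx0 : x ≠ 0 := fun h0 => by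
    obtain ⟨h₁, h₂⟩ := huv _ _ h0
    linarith
  have hcs : inner ℝ u v < ‖u‖ * ‖v‖ := by
    refine inner_lt_norm_mul_iff_real.2 fun heq => hv ?_
    exact norm_eq_zero.1 (huv ‖v‖ (-‖u‖) (by rw [heq]; module)).1
  have hcos := congrArg Real.cos h
  rw [cos_angle, cos_angle, div_eq_div_iff (by positivity) (by positivity), hx,
    inner_add_right, inner_add_left, real_inner_smul_right, real_inner_smul_right,
    real_inner_smul_left, real_inner_smul_left, real_inner_self_eq_norm_sq,
    real_inner_self_eq_norm_sq, ← hx] at hcos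
  have hcross :
      ((1 - t) * ‖u‖ - t * ‖v‖) * (‖u‖ * ‖v‖ - inner ℝ u v) * ‖x‖ = 0 := by
    linear_combination hcos
  have hgap : ‖u‖ * ‖v‖ - inner ℝ u v ≠ 0 := sub_ne_zero.2 hcs.ne'
  exact sub_eq_zero.1 <| (mul_eq_zero.1 <| (mul_eq_zero.1 hcross).resolve_right
    (norm_ne_zero_iff.2 hx0)).resolve_right hgap

end InnerProductGeometry

namespace EuclideanGeometry

variable {V P : Type*} [NormedAddCommGroup V] [InnerProductSpace ℝ V] [MetricSpace P]
  [NormedAddTorsor V P]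

theorem eq_of_collinear_lineMap_of_angle_eq {A B C D L : P} {s t : ℝ}
    (hALC : ∠ A L C = π) (hBLD : ∠ B L D = π)
    (hpow : dist A L * dist C L = dist B L * dist D L)
    (hALD : LinearIndependent ℝ ![A -ᵥ L, D -ᵥ L])
    (hbisect : ∠ A L (lineMap A D t) = ∠ (lineMap A D t) L D)
    (hcol : Collinear ℝ ({L, lineMap A D t, lineMap B C s} : Set P)) :
    s = t := by
  obtain ⟨-, γ, hγ, hC⟩ := InnerProductGeometry.angle_eq_pi_iff.1 hALC
  obtain ⟨-, β, hβ, hB⟩ :=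
    InnerProductGeometry.angle_eq_pi_iff.1 ((angle_comm D L B).trans hBLD)
  set u := A -ᵥ L
  set v := D -ᵥ L
  have hu : 0 < ‖u‖ := norm_pos_iff.2 (hALD.ne_zero 0)
  have hv : 0 < ‖v‖ := norm_pos_iff.2 (hALD.ne_zero 1)
  have hpow_norm : γ * ‖u‖ ^ 2 = β * ‖v‖ ^ 2 := by
    simp only [dist_eq_norm_vsub V, hC, hB, norm_smul, Real.norm_of_nonpos hγ.le,
      Real.norm_of_nonpos hβ.le] at hpow
    linear_combination -hpow
  have hN : lineMap A D t -ᵥ L = (1 - t) • u + t • v := lineMap_vsub_eq_smul_add_smul A D L t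
  have hM : lineMap B C s -ᵥ L = (s * γ) • u + ((1 - s) * β) • v := by
    rw [lineMap_vsub_eq_smul_add_smul, hB, hC]
    module
  have hratio : (1 - t) * ‖u‖ = t * ‖v‖ :=
    InnerProductGeometry.mul_norm_eq_mul_norm_of_angle_eq hALD (by rw [← hN]; exact hbisect)
  obtain ⟨w, hw⟩ := (collinear_iff_of_mem (by simp : L ∈ _)).1 hcol
  obtain ⟨r, hr⟩ := hw (lineMap A D t) (by simp)
  obtain ⟨r', hr'⟩ := hw (lineMap B C s) (by simp)
  have hparallel : (1 - t) * ((1 - s) * β) = t * (s * γ) :=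
    hALD.mul_eq_mul_of_smul_eq (by rw [← hN, hr, vadd_vsub]) (by rw [← hM, hr', vadd_vsub])
  have ht : t ≠ 0 := by
    rintro rfl
    simp only [sub_zero, one_mul, zero_mul] at hratio
    exact hu.ne' hratio
  have hst : (β * t * ‖v‖ * (‖u‖ + ‖v‖)) * (t - s) = 0 := by
    linear_combination
      ‖u‖ ^ 2 * hparallel + t * s * hpow_norm - β * ((1 - s) * ‖u‖ + t * ‖v‖) * hratio
  have hfactor : β * t * ‖v‖ * (‖u‖ + ‖v‖) ≠ 0 :=
    mul_ne_zero (mul_ne_zero (mul_ne_zero hβ.ne ht) hv.ne') (add_pos hu hv).ne'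
  linarith [(mul_eq_zero.1 hst).resolve_left hfactor]

end EuclideanGeometry

theorem cyclic_quadrilateral_bisector_ratio_general
    (A B C D L M N : EuclideanSpace ℝ (Fin 2))
    (hAB : A ≠ B) (hAD : A ≠ D) (hBD : B ≠ D)
    (hconcyclic : ∃ O : EuclideanSpace ℝ (Fin 2), ∃ r : ℝ,
      dist A O = r ∧ dist B O = r ∧ dist C O = r ∧ dist D O = r)
    (hL_AC : L ∈ segment ℝ A C) (hL_BD : L ∈ segment ℝ B D)
    (hLA : L ≠ A) (hLB : L ≠ B) (hLC : L ≠ C) (hLD : L ≠ D)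
    (hN_AD : N ∈ segment ℝ A D)
    (hbisect : ∠ A L N = ∠ N L D)
    (hM_BC : M ∈ affineSpan ℝ ({B, C} : Set (EuclideanSpace ℝ (Fin 2))))
    (hM_line : Collinear ℝ ({L, N, M} : Set (EuclideanSpace ℝ (Fin 2)))) :
    dist B M * dist N D = dist A N * dist M C := by
  obtain ⟨O, r, hAO, hBO, hCO, hDO⟩ := hconcyclic
  have hcospherical : Cospherical ({A, C, B, D} : Set (EuclideanSpace ℝ (Fin 2))) :=
    ⟨O, r, by simp [hAO, hBO, hCO, hDO]⟩
  have hALC : ∠ A L C = π := angle_eq_pi_iff_sbtw.2 ⟨mem_segment_iff_wbtw.1 hL_AC, hLA, hLC⟩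
  have hBLD : ∠ B L D = π := angle_eq_pi_iff_sbtw.2 ⟨mem_segment_iff_wbtw.1 hL_BD, hLB, hLD⟩
  have hABD : ¬ Collinear ℝ ({A, B, D} : Set (EuclideanSpace ℝ (Fin 2))) :=
    affineIndependent_iff_not_collinear_set.1
      (hcospherical.affineIndependent_of_mem_of_ne (by simp) (by simp) (by simp) hAB hAD hBD)
  have hLAD : ¬ Collinear ℝ ({L, A, D} : Set (EuclideanSpace ℝ (Fin 2))) := fun h =>
    hABD (collinear_of_collinear_of_mem_affineSpan_pair
      (mem_segment_iff_wbtw.1 hL_BD).mem_affineSpan hLD h)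
  obtain ⟨t, -, rfl⟩ := segment_eq_image_lineMap ℝ A D ▸ hN_AD
  obtain ⟨s, rfl⟩ := mem_affineSpan_pair_iff_exists_lineMap_eq.1 hM_BC
  obtain rfl : s = t := eq_of_collinear_lineMap_of_angle_eq hALC hBLD
    (mul_dist_eq_mul_dist_of_cospherical_of_angle_eq_pi hcospherical hALC hBLD)
    (linearIndependent_vsub_of_not_collinear hLAD) hbisect hM_line
  rw [dist_left_lineMap, dist_left_lineMap, dist_lineMap_right, dist_lineMap_right]
  ring

/-- Let `ABCD` be a quadrilateral inscribed in a circle whose diagonals `AC` and `BD` meet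
at an interior point `L`. The internal bisector of angle `ALD` meets segment `AD` at `N`
and line `BC` at `M` (so `L`, `N`, `M` are collinear and `∠ALN = ∠NLD`).
Then `BM / MC = AN / ND`, i.e. `BM ⬝ ND = AN ⬝ MC`. -/
theorem cyclic_quadrilateral_bisector_ratio
    (A B C D L M N : EuclideanSpace ℝ (Fin 2))
    (hAB : A ≠ B) (hAC : A ≠ C) (hAD : A ≠ D) (hBC : B ≠ C) (hBD : B ≠ D) (hCD : C ≠ D)
    (hconcyclic : ∃ O : EuclideanSpace ℝ (Fin 2), ∃ r : ℝ,
      dist A O = r ∧ dist B O = r ∧ dist C O = r ∧ dist D O = r)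
    (hL_AC : L ∈ segment ℝ A C) (hL_BD : L ∈ segment ℝ B D)
    (hLA : L ≠ A) (hLB : L ≠ B) (hLC : L ≠ C) (hLD : L ≠ D)
    (hN_AD : N ∈ segment ℝ A D) (hNL : N ≠ L)
    (hbisect : ∠ A L N = ∠ N L D)
    (hM_BC : M ∈ affineSpan ℝ ({B, C} : Set (EuclideanSpace ℝ (Fin 2))))
    (hM_line : Collinear ℝ ({L, N, M} : Set (EuclideanSpace ℝ (Fin 2)))) :
    dist B M * dist N D = dist A N * dist M C :=
  cyclic_quadrilateral_bisector_ratio_general A B C D L M N hAB hAD hBD hconcyclic hL_AC hL_BD hLA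
    hLB hLC hLD hN_AD hbisect hM_BC hM_line
end

section
/- Let ALB be a right triangle with right angle at L and H the foot of the altitude from L onto AB. Suppose a line ℓ passes through L, and let α be the angle between ℓ and line LA. If a circle passes through H and meets line AB again at X (with order A, H, X, B or A, X, H, B), and t_A, t_B denote tangent lengths from A, B to the circle, then t_A²/AL² + t_B²/BL² = 1. Consequently, if the distance a from A to ℓ satisfies a = t_A, then the distance b from B to ℓ satisfies b = t_B. -/
/-!
Put `u = B - A`, `H = A + h u` and `X = A + x u`. The power of `A` along the secant `HX` is
`⟪H - A, X - A⟫ = h x ‖u‖²`, while Euclid's leg theorem gives `AL² = ⟪H - A, B - A⟫ = h ‖u‖²`;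
hence `t_A² / AL² = x` and symmetrically `t_B² / BL² = 1 - x`.

For a line `ℓ` through `L` with direction `v`, `dist (A, ℓ)² = AL² - ⟪v, A - L⟫² / ‖v‖²`. As
`A - L` and `B - L` form an orthogonal basis of the plane, Parseval's identity turns the sum
`dist (A, ℓ)² / AL² + dist (B, ℓ)² / BL²` into `2 - 1 = 1`. Comparing the two identities,
`dist (A, ℓ) = t_A` forces `dist (B, ℓ) = t_B`.
-/

open scoped RealInnerProductSpace
open Module

theorem inner_sq_div_add_inner_sq_div_eq_norm_sq {V : Type*} [NormedAddCommGroup V]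
    [InnerProductSpace ℝ V] [Fact (finrank ℝ V = 2)] {e₁ e₂ : V} (h₁ : e₁ ≠ 0) (h₂ : e₂ ≠ 0)
    (h₁₂ : ⟪e₁, e₂⟫ = 0) (v : V) :
    ⟪v, e₁⟫ ^ 2 / ‖e₁‖ ^ 2 + ⟪v, e₂⟫ ^ 2 / ‖e₂‖ ^ 2 = ‖v‖ ^ 2 := by
  obtain ⟨a, c, rfl⟩ : ∃ a c : ℝ, v = a • e₁ + c • e₂ := by
    have hperp : ⟪e₁, v - (⟪v, e₁⟫ / ‖e₁‖ ^ 2) • e₁⟫ = 0 := by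
      rw [inner_sub_right, real_inner_smul_right, real_inner_self_eq_norm_sq, real_inner_comm,
        div_mul_cancel₀ _ (pow_ne_zero 2 (norm_ne_zero_iff.mpr h₁)), sub_self]
    obtain ⟨c, hc⟩ := Submodule.mem_span_singleton.mp
      (Submodule.mem_span_singleton_of_inner_eq_zero_of_inner_eq_zero h₁ h₂ hperp h₁₂)
    exact ⟨_, c, by rw [hc]; abel⟩
  have h₂₁ : ⟪e₂, e₁⟫ = 0 := by rwa [real_inner_comm]
  simp only [inner_add_left, real_inner_smul_left, real_inner_self_eq_norm_sq, h₁₂, h₂₁,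
    norm_add_sq_real, real_inner_smul_right, norm_smul, Real.norm_eq_abs, mul_pow, sq_abs,
    mul_zero, add_zero, zero_add]
  field_simp [norm_ne_zero_iff.mpr h₁, norm_ne_zero_iff.mpr h₂]

namespace EuclideanGeometry

variable {V P : Type*} [NormedAddCommGroup V] [InnerProductSpace ℝ V] [MetricSpace P]
  [NormedAddTorsor V P]

theorem Sphere.power_eq_inner_vsub_vsub {s : Sphere P} {p a b : P}
    (hp : p ∈ line[ℝ, a, b]) (ha : a ∈ s) (hb : b ∈ s) :
    s.power p = ⟪a -ᵥ p, b -ᵥ p⟫ := by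
  obtain ⟨t, rfl⟩ := mem_affineSpan_pair_iff_exists_lineMap_eq.mp hp
  have hb' : ‖(b -ᵥ a) + (a -ᵥ s.center)‖ ^ 2 = ‖a -ᵥ s.center‖ ^ 2 := by
    rw [vsub_add_vsub_cancel, ← dist_eq_norm_vsub V, ← dist_eq_norm_vsub V, mem_sphere.mp ha,
      mem_sphere.mp hb]
  rw [Sphere.power, ← mem_sphere.mp ha, dist_eq_norm_vsub V, dist_eq_norm_vsub V,
    AffineMap.left_vsub_lineMap, AffineMap.right_vsub_lineMap, AffineMap.lineMap_apply,
    vadd_vsub_assoc, ← neg_vsub_eq_vsub_rev b a]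
  simp only [norm_add_sq_real, real_inner_smul_left, real_inner_smul_right, inner_neg_left,
    norm_smul, Real.norm_eq_abs, mul_pow, sq_abs, real_inner_self_eq_norm_sq] at hb' ⊢
  linear_combination t * hb'

theorem dist_sq_eq_inner_vsub_vsub_of_inner_eq_zero {a b l h : P}
    (hl : ⟪a -ᵥ l, b -ᵥ l⟫ = 0) (hh : ⟪l -ᵥ h, b -ᵥ a⟫ = 0) :
    dist a l ^ 2 = ⟪h -ᵥ a, b -ᵥ a⟫ := by
  rw [dist_eq_norm_vsub V, ← real_inner_self_eq_norm_sq]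
  rw [← vsub_sub_vsub_cancel_right b a l, ← neg_vsub_eq_vsub_rev h l] at hh
  rw [← vsub_sub_vsub_cancel_right b a l, ← vsub_sub_vsub_cancel_right h a l]
  simp only [inner_sub_left, inner_sub_right, inner_neg_left] at hh ⊢
  linarith [real_inner_comm (a -ᵥ l) (h -ᵥ l)]

theorem inner_div_inner_add_inner_div_inner_eq_one {a b h x : P} (hx : x ∈ line[ℝ, a, b])
    (ha : ⟪h -ᵥ a, b -ᵥ a⟫ ≠ 0) (hb : ⟪h -ᵥ b, a -ᵥ b⟫ ≠ 0) :
    ⟪h -ᵥ a, x -ᵥ a⟫ / ⟪h -ᵥ a, b -ᵥ a⟫ + ⟪h -ᵥ b, x -ᵥ b⟫ / ⟪h -ᵥ b, a -ᵥ b⟫ = 1 := by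
  obtain ⟨t, rfl⟩ := mem_affineSpan_pair_iff_exists_lineMap_eq.mp hx
  rw [AffineMap.lineMap_vsub_left, AffineMap.lineMap_vsub_right, real_inner_smul_right,
    real_inner_smul_right, mul_div_cancel_right₀ _ ha, mul_div_cancel_right₀ _ hb]
  ring

-- For `q = l` the line is `{l}`, and the formula still holds since `x / 0 = 0`.
theorem infDist_affineSpan_pair_sq (p l q : P) :
    Metric.infDist p (line[ℝ, l, q] : Set P) ^ 2 =
      dist p l ^ 2 - ⟪q -ᵥ l, p -ᵥ l⟫ ^ 2 / dist q l ^ 2 := by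
  have hl : l ∈ line[ℝ, l, q] := left_mem_affineSpan_pair ℝ l q
  have : Nonempty (line[ℝ, l, q]) := ⟨⟨l, hl⟩⟩
  have hpyth := dist_sq_eq_dist_orthogonalProjection_sq_add_dist_orthogonalProjection_sq p hl
  have hproj : (orthogonalProjection line[ℝ, l, q] p : P) -ᵥ l =
      (⟪q -ᵥ l, p -ᵥ l⟫ / ‖q -ᵥ l‖ ^ 2) • (q -ᵥ l) := by
    rw [orthogonalProjection_apply_mem _ hl, vadd_vsub,
      Submodule.coe_orthogonalProjectionOnto_apply]
    simp only [direction_affineSpan, vectorSpan_pair_rev]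
    rw [Submodule.starProjection_singleton]
    simp
  rw [← dist_orthogonalProjection_eq_infDist]
  generalize (orthogonalProjection line[ℝ, l, q] p : P) = o at hpyth hproj ⊢
  rw [dist_comm l p, dist_comm l o, ← sq, ← sq, ← sq, dist_eq_norm_vsub V o, hproj, norm_smul,
    mul_pow, Real.norm_eq_abs, sq_abs] at hpyth
  rw [hpyth, dist_eq_norm_vsub V q]
  rcases eq_or_ne ‖q -ᵥ l‖ 0 with h | h
  · simp [h]
  · field_simp
    ring

theorem infDist_sq_div_add_infDist_sq_div_eq_one [Fact (finrank ℝ V = 2)] {a b l q : P}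
    (hab : ⟪a -ᵥ l, b -ᵥ l⟫ = 0) (ha : a ≠ l) (hb : b ≠ l) (hq : q ≠ l) :
    Metric.infDist a (line[ℝ, l, q] : Set P) ^ 2 / dist a l ^ 2 +
      Metric.infDist b (line[ℝ, l, q] : Set P) ^ 2 / dist b l ^ 2 = 1 := by
  have hparseval := inner_sq_div_add_inner_sq_div_eq_norm_sq (vsub_ne_zero.mpr ha)
    (vsub_ne_zero.mpr hb) hab (q -ᵥ l)
  simp only [← dist_eq_norm_vsub V] at hparseval
  rw [infDist_affineSpan_pair_sq, infDist_affineSpan_pair_sq]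
  field_simp [dist_ne_zero.mpr ha, dist_ne_zero.mpr hb, dist_ne_zero.mpr hq] at hparseval ⊢
  linear_combination -hparseval

end EuclideanGeometry

open EuclideanGeometry

theorem tangent_lengths_ratio_and_transfer_general
    (A B L H X I : EuclideanSpace ℝ (Fin 2)) (r : ℝ)
    (hAL : A ≠ L) (hBL : B ≠ L)
    (hright : ⟪A - L, B - L⟫ = 0)
    (hH_mem : H ∈ affineSpan ℝ ({A, B} : Set (EuclideanSpace ℝ (Fin 2))))
    (hH_perp : ⟪L - H, B - A⟫ = 0)
    (hH_on : dist H I = r) (hX_on : dist X I = r) (hHX : H ≠ X)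
    (hX_seg : X ∈ segment ℝ A B) :
    (dist A I ^ 2 - r ^ 2) / dist A L ^ 2 + (dist B I ^ 2 - r ^ 2) / dist B L ^ 2 = 1 ∧
    ∀ Q : EuclideanSpace ℝ (Fin 2), Q ≠ L →
      Metric.infDist A (affineSpan ℝ ({L, Q} : Set (EuclideanSpace ℝ (Fin 2))) : Set (EuclideanSpace ℝ (Fin 2))) ^ 2 = dist A I ^ 2 - r ^ 2 →
      Metric.infDist B (affineSpan ℝ ({L, Q} : Set (EuclideanSpace ℝ (Fin 2))) : Set (EuclideanSpace ℝ (Fin 2))) ^ 2 = dist B I ^ 2 - r ^ 2 := by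
  have : Fact (finrank ℝ (EuclideanSpace ℝ (Fin 2)) = 2) := ⟨finrank_euclideanSpace_fin⟩
  let s : Sphere (EuclideanSpace ℝ (Fin 2)) := ⟨I, r⟩
  have hX : X ∈ line[ℝ, A, B] := (mem_segment_iff_wbtw.mp hX_seg).mem_affineSpan
  have hcol := collinear_insert_insert_of_mem_affineSpan_pair hH_mem hX
  have hA : A ∈ line[ℝ, H, X] := hcol.mem_affineSpan_of_mem_of_ne (by simp) (by simp) (by simp) hHX
  have hB : B ∈ line[ℝ, H, X] := hcol.mem_affineSpan_of_mem_of_ne (by simp) (by simp) (by simp) hHX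
  have htA : dist A I ^ 2 - r ^ 2 = ⟪H -ᵥ A, X -ᵥ A⟫ :=
    Sphere.power_eq_inner_vsub_vsub (s := s) hA hH_on hX_on
  have htB : dist B I ^ 2 - r ^ 2 = ⟪H -ᵥ B, X -ᵥ B⟫ :=
    Sphere.power_eq_inner_vsub_vsub (s := s) hB hH_on hX_on
  have hAL2 : dist A L ^ 2 = ⟪H -ᵥ A, B -ᵥ A⟫ :=
    dist_sq_eq_inner_vsub_vsub_of_inner_eq_zero hright hH_perp
  have hBL2 : dist B L ^ 2 = ⟪H -ᵥ B, A -ᵥ B⟫ :=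
    dist_sq_eq_inner_vsub_vsub_of_inner_eq_zero (by rwa [real_inner_comm])
      (by rw [← neg_vsub_eq_vsub_rev B A, inner_neg_right, neg_eq_zero]; exact hH_perp)
  have hBL0 : dist B L ^ 2 ≠ 0 := pow_ne_zero 2 (dist_ne_zero.mpr hBL)
  have hsum : (dist A I ^ 2 - r ^ 2) / dist A L ^ 2 + (dist B I ^ 2 - r ^ 2) / dist B L ^ 2 = 1 := by
    rw [htA, htB, hAL2, hBL2]
    exact inner_div_inner_add_inner_div_inner_eq_one hX
      (hAL2 ▸ pow_ne_zero 2 (dist_ne_zero.mpr hAL)) (hBL2 ▸ hBL0)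
  refine ⟨hsum, fun Q hQ hA_dist => ?_⟩
  have hline := infDist_sq_div_add_infDist_sq_div_eq_one hright hAL hBL hQ
  rw [hA_dist, ← hsum, add_right_inj] at hline
  exact (div_left_inj' hBL0).mp hline

/-- Right triangle `ALB` with right angle at `L`, `H` the foot of the altitude from `L` onto
`AB`. A circle (center `I`, radius `r`) passes through `H` and meets line `AB` in a second
point `X` strictly between `A` and `B`, with `A`, `B` outside the circle. Writing
`t_A² = AI² - r²` and `t_B² = BI² - r²` for the powers of `A` and `B`, we have
`t_A²/AL² + t_B²/BL² = 1`. Consequently, for any line `ℓ` through `L`, if the distance from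
`A` to `ℓ` equals the tangent length `t_A`, then the distance from `B` to `ℓ` equals `t_B`. -/
theorem tangent_lengths_ratio_and_transfer
    (A B L H X I : EuclideanSpace ℝ (Fin 2)) (r : ℝ) (hr : 0 < r)
    (hAL : A ≠ L) (hBL : B ≠ L)
    (hright : ⟪A - L, B - L⟫ = 0)
    (hH_mem : H ∈ affineSpan ℝ ({A, B} : Set (EuclideanSpace ℝ (Fin 2))))
    (hH_perp : ⟪L - H, B - A⟫ = 0)
    (hH_on : dist H I = r) (hX_on : dist X I = r) (hHX : H ≠ X)
    (hX_seg : X ∈ segment ℝ A B) (hXA : X ≠ A) (hXB : X ≠ B)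
    (hA_out : r < dist A I) (hB_out : r < dist B I) :
    (dist A I ^ 2 - r ^ 2) / dist A L ^ 2 + (dist B I ^ 2 - r ^ 2) / dist B L ^ 2 = 1 ∧
    ∀ Q : EuclideanSpace ℝ (Fin 2), Q ≠ L →
      Metric.infDist A (affineSpan ℝ ({L, Q} : Set (EuclideanSpace ℝ (Fin 2))) : Set (EuclideanSpace ℝ (Fin 2))) ^ 2 = dist A I ^ 2 - r ^ 2 →
      Metric.infDist B (affineSpan ℝ ({L, Q} : Set (EuclideanSpace ℝ (Fin 2))) : Set (EuclideanSpace ℝ (Fin 2))) ^ 2 = dist B I ^ 2 - r ^ 2 :=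
  tangent_lengths_ratio_and_transfer_general A B L H X I r hAL hBL hright hH_mem hH_perp hH_on hX_on
    hHX hX_seg
end

section
/- Given four distinct points (xᵢ, xᵢ²), i = 1..4, on the parabola y = x², consider the conics A x² + B xy + C y² + D x + E y + F = 0 satisfying the parabola condition B² = 4AC and containing the four points; then there are at most two proportionality classes of such coefficient tuples (A,B,C,D,E,F). -/
/-- The value at the point `(x, x²)` of the conic with coefficient vector
`c = (A, B, C, D, E, F)`: `A x² + B x y + C y² + D x + E y + F` with `y = x²`. -/
def conicEvalOnParabola (c : Fin 6 → ℝ) (x : ℝ) : ℝ :=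
  c 0 * x ^ 2 + c 1 * (x * x ^ 2) + c 2 * (x ^ 2) ^ 2 + c 3 * x + c 4 * x ^ 2 + c 5

/-- `c` is a parabola-type conic through the four points `(xᵢ, xᵢ²)`:
it vanishes at each point, satisfies the parabola condition `B² - 4AC = 0`, and its
quadratic part `(A, B, C)` is nonzero. -/
def IsParabolaThrough (c : Fin 6 → ℝ) (x₁ x₂ x₃ x₄ : ℝ) : Prop :=
  conicEvalOnParabola c x₁ = 0 ∧ conicEvalOnParabola c x₂ = 0 ∧
  conicEvalOnParabola c x₃ = 0 ∧ conicEvalOnParabola c x₄ = 0 ∧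
  (c 1) ^ 2 - 4 * c 0 * c 2 = 0 ∧ ¬(c 0 = 0 ∧ c 1 = 0 ∧ c 2 = 0)

/-- The second possible parabola through the four points. -/
noncomputable def otherParabola (x₁ x₂ x₃ x₄ : ℝ) : Fin 6 → ℝ :=
  ![(x₁ + x₂ + x₃ + x₄) ^ 2 / 4, -(x₁ + x₂ + x₃ + x₄), 1,
    -(x₁ * x₂ * x₃ + x₁ * x₂ * x₄ + x₁ * x₃ * x₄ + x₂ * x₃ * x₄),
    (x₁ * x₂ + x₁ * x₃ + x₁ * x₄ + x₂ * x₃ + x₂ * x₄ + x₃ * x₄)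
      - (x₁ + x₂ + x₃ + x₄) ^ 2 / 4,
    x₁ * x₂ * x₃ * x₄]

lemma parabola_classify (x₁ x₂ x₃ x₄ : ℝ)
    (h12 : x₁ ≠ x₂) (h13 : x₁ ≠ x₃) (h14 : x₁ ≠ x₄)
    (h23 : x₂ ≠ x₃) (h24 : x₂ ≠ x₄) (h34 : x₃ ≠ x₄)
    (c : Fin 6 → ℝ) (hc : IsParabolaThrough c x₁ x₂ x₃ x₄) :
    ∃ t : ℝ, t ≠ 0 ∧
      (c = t • ![(1:ℝ), 0, 0, 0, -1, 0] ∨ c = t • otherParabola x₁ x₂ x₃ x₄) := by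
  obtain ⟨h1, h2, h3, h4, hpar, hq⟩ := hc
  unfold conicEvalOnParabola at h1 h2 h3 h4
  -- first divided differences
  have hG1 : c 2 * (x₁^3 + x₁^2*x₂ + x₁*x₂^2 + x₂^3) + c 1 * (x₁^2 + x₁*x₂ + x₂^2)
      + (c 0 + c 4) * (x₁ + x₂) + c 3 = 0 := by
    apply mul_left_cancel₀ (sub_ne_zero.mpr h12)
    linear_combination h1 - h2
  have hG2 : c 2 * (x₂^3 + x₂^2*x₃ + x₂*x₃^2 + x₃^3) + c 1 * (x₂^2 + x₂*x₃ + x₃^2)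
      + (c 0 + c 4) * (x₂ + x₃) + c 3 = 0 := by
    apply mul_left_cancel₀ (sub_ne_zero.mpr h23)
    linear_combination h2 - h3
  have hG3 : c 2 * (x₃^3 + x₃^2*x₄ + x₃*x₄^2 + x₄^3) + c 1 * (x₃^2 + x₃*x₄ + x₄^2)
      + (c 0 + c 4) * (x₃ + x₄) + c 3 = 0 := by
    apply mul_left_cancel₀ (sub_ne_zero.mpr h34)
    linear_combination h3 - h4
  -- second divided differences
  have hH1 : c 2 * (x₁^2 + x₂^2 + x₃^2 + x₁*x₂ + x₁*x₃ + x₂*x₃)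
      + c 1 * (x₁ + x₂ + x₃) + (c 0 + c 4) = 0 := by
    apply mul_left_cancel₀ (sub_ne_zero.mpr h13)
    linear_combination hG1 - hG2
  have hH2 : c 2 * (x₂^2 + x₃^2 + x₄^2 + x₂*x₃ + x₂*x₄ + x₃*x₄)
      + c 1 * (x₂ + x₃ + x₄) + (c 0 + c 4) = 0 := by
    apply mul_left_cancel₀ (sub_ne_zero.mpr h24)
    linear_combination hG2 - hG3
  -- third divided difference
  have hB : c 1 = -(c 2) * (x₁ + x₂ + x₃ + x₄) := by
    have h := sub_ne_zero.mpr h14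
    apply mul_left_cancel₀ h
    linear_combination hH1 - hH2
  have hAE : c 0 + c 4 = c 2 * (x₁*x₂ + x₁*x₃ + x₁*x₄ + x₂*x₃ + x₂*x₄ + x₃*x₄) := by
    linear_combination hH1 - (x₁ + x₂ + x₃) * hB
  have hD : c 3 = -(c 2) * (x₁*x₂*x₃ + x₁*x₂*x₄ + x₁*x₃*x₄ + x₂*x₃*x₄) := by
    linear_combination hG1 - (x₁^2 + x₁*x₂ + x₂^2) * hB - (x₁ + x₂) * hAE
  have hF : c 5 = c 2 * (x₁*x₂*x₃*x₄) := by
    linear_combination h1 - (x₁*x₁^2) * hB - x₁^2 * hAE - x₁ * hD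
  by_cases hC : c 2 = 0
  · -- the standard parabola
    have hB0 : c 1 = 0 := by rw [hB, hC]; ring
    have hD0 : c 3 = 0 := by rw [hD, hC]; ring
    have hF0 : c 5 = 0 := by rw [hF, hC]; ring
    have hE0 : c 4 = -c 0 := by rw [hC] at hAE; linarith
    have hA0 : c 0 ≠ 0 := fun h0 => hq ⟨h0, hB0, hC⟩
    refine ⟨c 0, hA0, Or.inl ?_⟩
    funext i
    fin_cases i
    · show c 0 = c 0 * 1; ring
    · show c 1 = c 0 * 0; rw [hB0]; ring
    · show c 2 = c 0 * 0; rw [hC]; ring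
    · show c 3 = c 0 * 0; rw [hD0]; ring
    · show c 4 = c 0 * (-1); rw [hE0]; ring
    · show c 5 = c 0 * 0; rw [hF0]; ring
  · -- the other parabola
    have hA : c 0 = c 2 * ((x₁ + x₂ + x₃ + x₄) ^ 2 / 4) := by
      apply mul_left_cancel₀ hC
      linear_combination (-(1:ℝ)/4) * hpar + ((c 1 - c 2 * (x₁ + x₂ + x₃ + x₄)) / 4) * hB
    refine ⟨c 2, hC, Or.inr ?_⟩
    funext i
    fin_cases i
    · show c 0 = c 2 * ((x₁ + x₂ + x₃ + x₄) ^ 2 / 4)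
      exact hA
    · show c 1 = c 2 * (-(x₁ + x₂ + x₃ + x₄))
      linear_combination hB
    · show c 2 = c 2 * 1
      ring
    · show c 3 = c 2 * (-(x₁ * x₂ * x₃ + x₁ * x₂ * x₄ + x₁ * x₃ * x₄ + x₂ * x₃ * x₄))
      linear_combination hD
    · show c 4 = c 2 * ((x₁ * x₂ + x₁ * x₃ + x₁ * x₄ + x₂ * x₃ + x₂ * x₄ + x₃ * x₄)
        - (x₁ + x₂ + x₃ + x₄) ^ 2 / 4)
      linear_combination hAE - hA
    · show c 5 = c 2 * (x₁ * x₂ * x₃ * x₄)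
      exact hF

/-- Through four distinct points `(xᵢ, xᵢ²)` of the parabola `y = x²` pass at most two
parabola-type conics, up to proportionality: among any three such conics, two are
proportional. -/
theorem at_most_two_parabolas_through_four_points
    (x₁ x₂ x₃ x₄ : ℝ)
    (h12 : x₁ ≠ x₂) (h13 : x₁ ≠ x₃) (h14 : x₁ ≠ x₄)
    (h23 : x₂ ≠ x₃) (h24 : x₂ ≠ x₄) (h34 : x₃ ≠ x₄)
    (c₁ c₂ c₃ : Fin 6 → ℝ)
    (hc₁ : IsParabolaThrough c₁ x₁ x₂ x₃ x₄)
    (hc₂ : IsParabolaThrough c₂ x₁ x₂ x₃ x₄)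
    (hc₃ : IsParabolaThrough c₃ x₁ x₂ x₃ x₄) :
    (∃ l : ℝ, c₂ = l • c₁) ∨ (∃ l : ℝ, c₃ = l • c₁) ∨ (∃ l : ℝ, c₃ = l • c₂) := by
  obtain ⟨t₁, ht₁, H₁⟩ := parabola_classify x₁ x₂ x₃ x₄ h12 h13 h14 h23 h24 h34 c₁ hc₁
  obtain ⟨t₂, ht₂, H₂⟩ := parabola_classify x₁ x₂ x₃ x₄ h12 h13 h14 h23 h24 h34 c₂ hc₂
  obtain ⟨t₃, ht₃, H₃⟩ := parabola_classify x₁ x₂ x₃ x₄ h12 h13 h14 h23 h24 h34 c₃ hc₃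
  have prop : ∀ (a b : Fin 6 → ℝ) (s u : ℝ) (w : Fin 6 → ℝ), s ≠ 0 →
      a = s • w → b = u • w → ∃ l : ℝ, b = l • a := by
    intro a b s u w hs ha hb
    refine ⟨u / s, ?_⟩
    rw [ha, hb, smul_smul]
    congr 1
    field_simp
  rcases H₁ with h₁ | h₁ <;> rcases H₂ with h₂ | h₂ <;> rcases H₃ with h₃ | h₃
  · exact Or.inl (prop c₁ c₂ t₁ t₂ _ ht₁ h₁ h₂)
  · exact Or.inl (prop c₁ c₂ t₁ t₂ _ ht₁ h₁ h₂)
  · exact Or.inr (Or.inl (prop c₁ c₃ t₁ t₃ _ ht₁ h₁ h₃))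
  · exact Or.inr (Or.inr (prop c₂ c₃ t₂ t₃ _ ht₂ h₂ h₃))
  · exact Or.inr (Or.inr (prop c₂ c₃ t₂ t₃ _ ht₂ h₂ h₃))
  · exact Or.inr (Or.inl (prop c₁ c₃ t₁ t₃ _ ht₁ h₁ h₃))
  · exact Or.inl (prop c₁ c₂ t₁ t₂ _ ht₁ h₁ h₂)
  · exact Or.inl (prop c₁ c₂ t₁ t₂ _ ht₁ h₁ h₂)
end
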